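/- Let D = d/dx act on smooth real-valued functions on ℝ and let L denote multiplication by the linear function ax + b. Then for every odd n, B(n,0,L,D) applied to the constant function 1 is zero, and for every even n > 0, B(n,0,L,D) applied to 1 equals the constant function (n-1)!! a^{n/2}; here B(n,0,L,D) = Σ_{k=0}^{n} C(n,k) (D - L)^k L^{n-k}. -/

import Mathlib

noncomputable section

def SmoothR : Submodule ℝ (ℝ → ℝ) where
  carrier := {f | ContDiff ℝ (⊤ : ℕ∞) f}
  add_mem' := fun {a b} (ha : ContDiff ℝ (⊤ : ℕ∞) a) (hb : ContDiff ℝ (⊤ : ℕ∞) b) => ha.add hb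
  zero_mem' := (contDiff_const : ContDiff ℝ (⊤ : ℕ∞) fun _ => (0 : ℝ))
  smul_mem' := fun c f (hf : ContDiff ℝ (⊤ : ℕ∞) f) => hf.const_smul c

lemma smoothR_contDiff (f : SmoothR) : ContDiff ℝ (⊤ : ℕ∞) (f : ℝ → ℝ) := f.2

lemma smoothR_mem (f : ℝ → ℝ) (hf : ContDiff ℝ (⊤ : ℕ∞) f) : f ∈ SmoothR := hf

/-- Differentiation `d/dx` as a linear operator on smooth functions. -/
def Dop : Module.End ℝ SmoothR where
  toFun f := ⟨deriv f, smoothR_mem _ (contDiff_infty_iff_deriv.mp (smoothR_contDiff f)).2⟩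
  map_add' f g := by
    ext x
    exact deriv_add ((smoothR_contDiff f).differentiable (by simp) x)
      ((smoothR_contDiff g).differentiable (by simp) x)
  map_smul' c f := by
    ext x
    exact deriv_const_smul c ((smoothR_contDiff f).differentiable (by simp) x)

/-- Multiplication by a smooth function as a linear operator on smooth functions. -/
def Mop (g : ℝ → ℝ) (hg : ContDiff ℝ (⊤ : ℕ∞) g) : Module.End ℝ SmoothR where
  toFun f := ⟨g * f, smoothR_mem _ (hg.mul (smoothR_contDiff f))⟩
  map_add' f g' := by ext x; simp [mul_add]
  map_smul' c f := by ext x; simp; ring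

lemma linSmooth (a b : ℝ) : ContDiff ℝ (⊤ : ℕ∞) (fun x : ℝ => a * x + b) :=
  (contDiff_const.mul contDiff_id).add contDiff_const

/-!
Write `A = D - L` and `B = L`, so that `orderedBinomial A B n` is the paper's `B(n,0,L,D)`, the
commutator `AB - BA = DL - LD = a` is central, and `A + B = D`. Left multiplication by `A` and
right multiplication by `B` commute, so `P n = orderedBinomial A B n` is `(λ_A + ρ_B)^n 1` and
`P (n + 1) = A * P n + P n * B`. The derivation `X ↦ XB - BX` sends `P (n + 1)` to
`(n + 1) a P n`, which turns this into `P (n + 2) = D * P (n + 1) + (n + 1) a P n`. On the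
constant `1`, which `D` kills, this becomes `c (n + 2) = (n + 1) a c n` with `c 0 = 1`, `c 1 = 0`,
solved by `c n = (n - 1)!! a^(n/2)` for even `n` and `c n = 0` for odd `n`.
-/

section OrderedBinomial

variable {R : Type*} [Semiring R] (A B : R)

def orderedBinomial (n : ℕ) : R :=
  ∑ k ∈ Finset.range (n + 1), n.choose k • (A ^ k * B ^ (n - k))

theorem orderedBinomial_eq_pow_apply_one (n : ℕ) :
    orderedBinomial A B n = ((LinearMap.mulLeft ℕ A + LinearMap.mulRight ℕ B) ^ n) 1 := by
  rw [(LinearMap.commute_mulLeft_right A B).add_pow, orderedBinomial, LinearMap.sum_apply]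
  refine Finset.sum_congr rfl fun k _ => ?_
  simp only [Module.End.mul_apply, Module.End.natCast_apply, LinearMap.pow_mulLeft,
    LinearMap.pow_mulRight, LinearMap.mulLeft_apply, LinearMap.mulRight_apply, smul_mul_assoc,
    one_mul, mul_smul_comm]

theorem orderedBinomial_zero : orderedBinomial A B 0 = 1 := by
  simp [orderedBinomial]

theorem orderedBinomial_succ (n : ℕ) :
    orderedBinomial A B (n + 1) = A * orderedBinomial A B n + orderedBinomial A B n * B := by
  simp only [orderedBinomial_eq_pow_apply_one, pow_succ', Module.End.mul_apply,
    LinearMap.add_apply, LinearMap.mulLeft_apply, LinearMap.mulRight_apply]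

theorem orderedBinomial_one : orderedBinomial A B 1 = A + B := by
  rw [orderedBinomial_succ, orderedBinomial_zero, mul_one, one_mul]

end OrderedBinomial

section CentralCommutator

variable {R : Type*} [Ring R] {A B c : R}

theorem orderedBinomial_succ_mul_sub_mul (h : A * B - B * A = c) (hc : Commute A c) (n : ℕ) :
    orderedBinomial A B (n + 1) * B - B * orderedBinomial A B (n + 1) =
      (n + 1) • (c * orderedBinomial A B n) := by
  induction n with
  | zero =>
    rw [orderedBinomial_one, orderedBinomial_zero, ← h]
    noncomm_ring
  | succ n ih =>
    calc orderedBinomial A B (n + 2) * B - B * orderedBinomial A B (n + 2)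
        = A * (orderedBinomial A B (n + 1) * B - B * orderedBinomial A B (n + 1)) +
            (A * B - B * A) * orderedBinomial A B (n + 1) +
            (orderedBinomial A B (n + 1) * B - B * orderedBinomial A B (n + 1)) * B := by
          rw [orderedBinomial_succ]; noncomm_ring
      _ = (n + 1) • (c * (A * orderedBinomial A B n + orderedBinomial A B n * B)) +
            c * orderedBinomial A B (n + 1) := by
          rw [ih, h, mul_smul_comm, smul_mul_assoc, ← mul_assoc, hc.eq, mul_assoc, mul_assoc,
            mul_add, smul_add]
          abel
      _ = (n + 1 + 1) • (c * orderedBinomial A B (n + 1)) := by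
          rw [← orderedBinomial_succ, succ_nsmul _ (n + 1)]

theorem orderedBinomial_add_two (h : A * B - B * A = c) (hc : Commute A c) (n : ℕ) :
    orderedBinomial A B (n + 2) =
      (A + B) * orderedBinomial A B (n + 1) + (n + 1) • (c * orderedBinomial A B n) := by
  rw [orderedBinomial_succ A B (n + 1), ← orderedBinomial_succ_mul_sub_mul h hc]
  noncomm_ring

end CentralCommutator

section AffineMultiplier

variable (a b : ℝ)

def constOne : SmoothR := ⟨fun _ : ℝ => (1 : ℝ), smoothR_mem _ contDiff_const⟩

def affineMul : Module.End ℝ SmoothR := Mop (fun x => a * x + b) (linSmooth a b)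

theorem Dop_constOne : Dop constOne = 0 := by
  ext x
  exact deriv_const x (1 : ℝ)

theorem Dop_mul_affineMul_sub_affineMul_mul :
    Dop * affineMul a b - affineMul a b * Dop = a • 1 := by
  ext f x
  have hf : DifferentiableAt ℝ (f : ℝ → ℝ) x :=
    (smoothR_contDiff f).differentiable (by simp) x
  have hprod : HasDerivAt (fun y => (a * y + b) * (f : ℝ → ℝ) y)
      (a * (f : ℝ → ℝ) x + (a * x + b) * deriv f x) x :=
    (((hasDerivAt_id x).const_mul a).add_const b).mul hf.hasDerivAt |>.congr_deriv (by simp)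
  change deriv (fun y => (a * y + b) * (f : ℝ → ℝ) y) x - (a * x + b) * deriv f x =
    a * (f : ℝ → ℝ) x
  rw [hprod.deriv]
  ring

theorem orderedBinomial_affineMul_add_two_apply (n : ℕ) (f : SmoothR) :
    orderedBinomial (Dop - affineMul a b) (affineMul a b) (n + 2) f =
      Dop (orderedBinomial (Dop - affineMul a b) (affineMul a b) (n + 1) f) +
        ((n + 1) * a) • orderedBinomial (Dop - affineMul a b) (affineMul a b) n f := by
  -- Unification does not find the ring structure of `Module.End ℝ SmoothR` from its `Sub`,
  -- so ring lemmas get their type explicitly, here and below.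
  have hcomm : (Dop - affineMul a b) * affineMul a b - affineMul a b * (Dop - affineMul a b) =
      a • 1 := by
    rw [← Dop_mul_affineMul_sub_affineMul_mul, sub_mul (α := Module.End ℝ SmoothR),
      mul_sub (α := Module.End ℝ SmoothR)]
    abel
  rw [orderedBinomial_add_two (R := Module.End ℝ SmoothR) hcomm
      ((Commute.one_right _).smul_right a),
    sub_add_cancel (G := Module.End ℝ SmoothR), smul_mul_assoc, one_mul,
    ← Nat.cast_smul_eq_nsmul ℝ, smul_smul]
  push_cast
  rfl

theorem orderedBinomial_affineMul_apply_constOne (m : ℕ) :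
    orderedBinomial (Dop - affineMul a b) (affineMul a b) (2 * m) constOne =
        ((2 * m - 1).doubleFactorial * a ^ m : ℝ) • constOne ∧
      orderedBinomial (Dop - affineMul a b) (affineMul a b) (2 * m + 1) constOne = 0 := by
  induction m with
  | zero =>
    refine ⟨by simp [orderedBinomial_zero], ?_⟩
    rw [orderedBinomial_one, sub_add_cancel (G := Module.End ℝ SmoothR)]
    exact Dop_constOne
  | succ m ih =>
    obtain ⟨heven, hodd⟩ := ih
    have heven' : orderedBinomial (Dop - affineMul a b) (affineMul a b) (2 * m + 1 + 1) constOne =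
        ((2 * (m + 1) - 1).doubleFactorial * a ^ (m + 1) : ℝ) • constOne := by
      rw [orderedBinomial_affineMul_add_two_apply, hodd, heven, map_zero, zero_add, smul_smul,
        show 2 * (m + 1) - 1 = 2 * m + 1 by omega, Nat.doubleFactorial_add_one]
      push_cast
      ring_nf
    refine ⟨heven', ?_⟩
    rw [show 2 * (m + 1) + 1 = 2 * m + 1 + 2 by ring, orderedBinomial_affineMul_add_two_apply,
      heven', hodd, map_smul, Dop_constOne, smul_zero, smul_zero, add_zero]

end AffineMultiplier

/-- The operator `B(n, 0, L, D) = Σ C(n,k) (D - L)^k L^{n-k}` for `L` multiplication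
by `ax + b`, applied to the constant function `1`: it vanishes for odd `n` and equals
the constant `(n-1)!! a^{n/2}` for even `n > 0`. -/
theorem binom_linear_identities (a b : ℝ) (n : ℕ) :
    (Odd n →
      (∑ k ∈ Finset.range (n + 1),
        n.choose k • ((Dop - Mop (fun x => a * x + b) (linSmooth a b)) ^ k *
          (Mop (fun x => a * x + b) (linSmooth a b)) ^ (n - k)))
        ⟨fun _ : ℝ => (1 : ℝ), smoothR_mem _ contDiff_const⟩ = 0) ∧
    (Even n → 0 < n →
      (∑ k ∈ Finset.range (n + 1),
        n.choose k • ((Dop - Mop (fun x => a * x + b) (linSmooth a b)) ^ k *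
          (Mop (fun x => a * x + b) (linSmooth a b)) ^ (n - k)))
        ⟨fun _ : ℝ => (1 : ℝ), smoothR_mem _ contDiff_const⟩ =
      (Nat.doubleFactorial (n - 1) * a ^ (n / 2)) •
        ⟨fun _ : ℝ => (1 : ℝ), smoothR_mem _ contDiff_const⟩) := by
  refine ⟨fun ⟨m, hm⟩ => hm ▸ (orderedBinomial_affineMul_apply_constOne a b m).2, ?_⟩
  rintro ⟨m, rfl⟩ -
  rw [← two_mul, Nat.mul_div_cancel_left m two_pos]
  exact (orderedBinomial_affineMul_apply_constOne a b m).1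

end
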